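/- In an algebra with distinguished elements a, b, c satisfying a⊗b = A·c + B·t^δ·c' and b⊗a = A^{-1}·c + B^{-1}·t^{-δ}·c' (with A = B = t^{-χ/2}, χ = ±1, δ ∈ {0,1}, (δ,χ) ∈ {(1,1),(0,-1)}), together with a⊗c = C·d + D·t^{δ-1}·d', c⊗a = C^{-1}·d + D^{-1}·t^{1-δ}·d', a⊗c' = E·t·d', c'⊗a = E^{-1}·t^{-1}·d' where C = D = E = t^{-χ/2} and c, c', d, d' are linearly independent, the quantum Serre relation holds: a^{⊗2}⊗b − (t + t^{-1})·a⊗b⊗a + b⊗a^{⊗2} = 0. -/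

import Mathlib

/-!
Associativity expresses all three triple products as combinations of `d` and `d'`: with
`s = u^{-χ}` and `t = u²`, the coefficient of `d` in the Serre combination is
`s² - (t + t⁻¹) + s⁻²` and that of `d'` is `(t + t⁻¹)(s² t^δ + s⁻² t^{-δ} - t^{1-δ} - t^{δ-1})`.
Since `s² = t^{-χ}`, the first vanishes because `χ = ±1`, and the second because
`δ - χ = ±(1 - δ)` in both admissible cases.
-/

theorem serre_combination_eq_smul_add_smul {F A : Type*} [CommRing F] [Ring A] [Algebra F A]
    {a b c c' d d' : A} {τ α β α' β' γ ε γ' ε' ζ ζ' : F}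
    (hab : a * b = α • c + β • c') (hba : b * a = α' • c + β' • c')
    (hac : a * c = γ • d + ε • d') (hca : c * a = γ' • d + ε' • d')
    (hac' : a * c' = ζ • d') (hc'a : c' * a = ζ' • d') :
    a * a * b - τ • (a * b * a) + b * (a * a) =
      (α * γ - τ * (α * γ') + α' * γ') • d
        + (α * ε + β * ζ - τ * (α * ε' + β * ζ') + α' * ε' + β' * ζ') • d' :=
  calc a * a * b - τ • (a * b * a) + b * (a * a)
      = a * (a * b) - τ • ((a * b) * a) + (b * a) * a := by simp only [mul_assoc]
    _ = α • (a * c) + β • (a * c') - τ • (α • (c * a) + β • (c' * a))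
          + (α' • (c * a) + β' • (c' * a)) := by
        rw [hab, hba]
        simp only [mul_add, add_mul, mul_smul_comm, smul_mul_assoc]
    _ = _ := by
        rw [hac, hca, hac', hc'a]
        module

theorem abstract_quantum_serre_general {F A : Type*} [Field F] [Ring A] [Algebra F A]
    (u : Fˣ) (χ δ : ℤ)
    (hcase : (δ = 1 ∧ χ = 1) ∨ (δ = 0 ∧ χ = -1))
    (a b c c' d d' : A)
    (h1 : a * b = ((u ^ (-χ) : Fˣ) : F) • c + ((u ^ (-χ + 2 * δ) : Fˣ) : F) • c')
    (h2 : b * a = ((u ^ χ : Fˣ) : F) • c + ((u ^ (χ - 2 * δ) : Fˣ) : F) • c')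
    (h3 : a * c = ((u ^ (-χ) : Fˣ) : F) • d + ((u ^ (-χ + 2 * δ - 2) : Fˣ) : F) • d')
    (h4 : c * a = ((u ^ χ : Fˣ) : F) • d + ((u ^ (χ - 2 * δ + 2) : Fˣ) : F) • d')
    (h5 : a * c' = ((u ^ (-χ + 2) : Fˣ) : F) • d')
    (h6 : c' * a = ((u ^ (χ - 2) : Fˣ) : F) • d') :
    a * a * b - (((u ^ (2 : ℤ) : Fˣ) : F) + ((u ^ (-2 : ℤ) : Fˣ) : F)) • (a * b * a)
      + b * (a * a) = 0 := by
  refine (serre_combination_eq_smul_add_smul h1 h2 h3 h4 h5 h6).trans ?_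
  obtain ⟨rfl, rfl⟩ | ⟨rfl, rfl⟩ := hcase <;> match_scalars <;>
    norm_num [zpow_neg] <;> field_simp <;> ring

/-- Abstract quantum Serre relation.  In an algebra over a field `F`
with `t = u²` (`u` a unit, so that `t^{±1/2} = u^{±1}` makes sense), given elements
`a, b, c, c', d, d'` with `c, c', d, d'` linearly independent, parameters `χ = ±1`,
`δ ∈ {0,1}` with `(δ,χ) ∈ {(1,1),(0,−1)}`, and product expansions
`a⊗b = A·c + B·t^δ·c'`, `b⊗a = A⁻¹·c + B⁻¹·t^{−δ}·c'`,
`a⊗c = C·d + D·t^{δ−1}·d'`, `c⊗a = C⁻¹·d + D⁻¹·t^{1−δ}·d'`,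
`a⊗c' = E·t·d'`, `c'⊗a = E⁻¹·t⁻¹·d'` with `A = B = C = D = E = t^{−χ/2} = u^{−χ}`,
the quantum Serre relation holds:
`a²⊗b − (t + t⁻¹)·a⊗b⊗a + b⊗a² = 0`. -/
theorem abstract_quantum_serre {F A : Type*} [Field F] [Ring A] [Algebra F A]
    (u : Fˣ) (χ δ : ℤ)
    (hcase : (δ = 1 ∧ χ = 1) ∨ (δ = 0 ∧ χ = -1))
    (a b c c' d d' : A)
    (hind : LinearIndependent F ![c, c', d, d'])
    (h1 : a * b = ((u ^ (-χ) : Fˣ) : F) • c + ((u ^ (-χ + 2 * δ) : Fˣ) : F) • c')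
    (h2 : b * a = ((u ^ χ : Fˣ) : F) • c + ((u ^ (χ - 2 * δ) : Fˣ) : F) • c')
    (h3 : a * c = ((u ^ (-χ) : Fˣ) : F) • d + ((u ^ (-χ + 2 * δ - 2) : Fˣ) : F) • d')
    (h4 : c * a = ((u ^ χ : Fˣ) : F) • d + ((u ^ (χ - 2 * δ + 2) : Fˣ) : F) • d')
    (h5 : a * c' = ((u ^ (-χ + 2) : Fˣ) : F) • d')
    (h6 : c' * a = ((u ^ (χ - 2) : Fˣ) : F) • d') :
    a * a * b - (((u ^ (2 : ℤ) : Fˣ) : F) + ((u ^ (-2 : ℤ) : Fˣ) : F)) • (a * b * a)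
      + b * (a * a) = 0 :=
  abstract_quantum_serre_general u χ δ hcase a b c c' d d' h1 h2 h3 h4 h5 h6
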